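/- arXiv:2303.00052 — 7 statements merged into one kernel-verified Lean document; each statement's English description precedes it below -/
import Mathlib

section
/- For a TU cost game (N,c) with empty core, the cost of stability equals the extended-core subsidy value: δ_CoS := c(N) - max{ x(N) : x(S) ≤ c(S) for all S ⊆ N } equals δ_ec := min{ t(N) : there exist x ∈ ℝ^N, t ∈ ℝ^N_≥0 with x(N) = c(N) and (x - t)(S) ≤ c(S) for all proper S ⊊ N }. -/
/-!
Both values compare the grand-coalition cost with the largest budget that no coalition objects to.
If `(x, t)` lies in the extended core, then `x - t` charges no coalition more than its cost, so
`c(N) - t(N)` is a stable budget. Conversely, a stable allocation `x` of budget `m` becomes an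
extended-core point once the deficit `c(N) - m ≥ 0` is paid to the agents as a subsidy `t` and added
to `x`, since `(x + t) - t = x`.
-/

open Finset

section ExtendedCore

variable {ι : Type*} [Fintype ι] {c : Finset ι → ℝ}

theorem sum_sub_le_of_extendedCore {x t : ι → ℝ} (ht : ∀ i, 0 ≤ t i)
    (hx : ∑ i, x i = c univ) (hproper : ∀ S, S ⊂ univ → ∑ i ∈ S, (x i - t i) ≤ c S) (S : Finset ι) :
    ∑ i ∈ S, (x i - t i) ≤ c S := by
  rcases (subset_univ S).ssubset_or_eq with hS | rfl
  · exact hproper S hS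
  · rw [sum_sub_distrib, hx, sub_le_self_iff]
    exact sum_nonneg fun i _ => ht i

theorem exists_nonneg_sum_eq [Nonempty ι] {δ : ℝ} (hδ : 0 ≤ δ) :
    ∃ t : ι → ℝ, (∀ i, 0 ≤ t i) ∧ ∑ i, t i = δ := by
  classical
  obtain ⟨j⟩ := ‹Nonempty ι›
  exact ⟨Pi.single j δ, fun i => (show (0 : ι → ℝ) ≤ Pi.single j δ from Pi.single_nonneg.2 hδ) i,
    by simp⟩

end ExtendedCore

theorem cost_of_stability_eq_extended_core_general {n : ℕ} (c : Finset (Fin n) → ℝ)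
    (m d : ℝ)
    (hm : IsGreatest {v : ℝ | ∃ x : Fin n → ℝ,
      (∀ S : Finset (Fin n), ∑ i ∈ S, x i ≤ c S) ∧ v = ∑ i, x i} m)
    (hd : IsLeast {v : ℝ | ∃ x t : Fin n → ℝ,
      (∀ i, 0 ≤ t i) ∧ (∑ i, x i = c univ) ∧
      (∀ S : Finset (Fin n), S ⊂ univ → ∑ i ∈ S, (x i - t i) ≤ c S) ∧
      v = ∑ i, t i} d) :
    c univ - m = d := by
  obtain ⟨⟨x, hx, rfl⟩, hm_ub⟩ := hm
  obtain ⟨⟨y, t, ht, hy, hyt, rfl⟩, hd_lb⟩ := hd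
  apply le_antisymm
  · have hstable := hm_ub ⟨y - t, sum_sub_le_of_extendedCore ht hy hyt, rfl⟩
    simp only [Pi.sub_apply, sum_sub_distrib, hy] at hstable
    linarith
  · rcases isEmpty_or_nonempty (Fin n) with hn | hn
    · simp only [univ_eq_empty, sum_empty] at hy ⊢
      linarith
    obtain ⟨s, hs, hs_sum⟩ := exists_nonneg_sum_eq (ι := Fin n) (sub_nonneg.2 (hx univ))
    refine hd_lb ⟨x + s, s, hs, ?_, fun S _ => ?_, hs_sum.symm⟩
    · simp only [Pi.add_apply, sum_add_distrib, hs_sum, add_sub_cancel]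
    · simpa using hx S

/-- For a TU cost game with empty core, the cost of stability
`δ_CoS = c(N) - max{x(N) : x(S) ≤ c(S) ∀ S ⊆ N}` equals the extended-core subsidy value
`δ_ec = min{t(N) : ∃ x, t ≥ 0, x(N) = c(N), (x-t)(S) ≤ c(S) ∀ S ⊊ N}`. -/
theorem cost_of_stability_eq_extended_core {n : ℕ} (c : Finset (Fin n) → ℝ)
    (hc : ∀ S, 0 ≤ c S)
    (hempty : ¬ ∃ x : Fin n → ℝ,
      (∀ S : Finset (Fin n), S ⊂ univ → ∑ i ∈ S, x i ≤ c S) ∧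
      ∑ i, x i = c univ)
    (m d : ℝ)
    (hm : IsGreatest {v : ℝ | ∃ x : Fin n → ℝ,
      (∀ S : Finset (Fin n), ∑ i ∈ S, x i ≤ c S) ∧ v = ∑ i, x i} m)
    (hd : IsLeast {v : ℝ | ∃ x t : Fin n → ℝ,
      (∀ i, 0 ≤ t i) ∧ (∑ i, x i = c univ) ∧
      (∀ S : Finset (Fin n), S ⊂ univ → ∑ i ∈ S, (x i - t i) ≤ c S) ∧
      v = ∑ i, t i} d) :
    c univ - m = d :=
  cost_of_stability_eq_extended_core_general c m d hm hd
end

section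
/- For a TU cost game (N,c) with empty core, the cost of stability δ_CoS = c(N) - max{ x(N) : x(S) ≤ c(S) for all S ⊆ N } equals n · ε_w*, where ε_w* is the smallest ε ≥ 0 such that the weak ε-core { x : x(S) ≤ c(S) + ε·|S| for all S ⊊ N, x(N) = c(N) } is non-empty. -/
/-!
Shifting every payoff by a constant `d` changes `x(S)` by `d * |S|`. Lowering a weak `ε`-core
allocation by `ε` therefore gives an allocation with `x(S) ≤ c(S)` for every `S` (for `S = N`
since `ε ≥ 0`) and total `c(N) - n ε`, so `c(N) - n ε_w ≤ m`. Conversely, raising a maximal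
allocation by `d = (c(N) - m) / n` lands in the weak `d`-core, so `ε_w ≤ d`.
-/

open Finset

theorem sum_sub_const_le_of_weak_core {ι : Type*} [Fintype ι] (c : Finset ι → ℝ) {ε : ℝ}
    (hε : 0 ≤ ε) {y : ι → ℝ}
    (hy : ∀ S : Finset ι, S ⊂ univ → ∑ i ∈ S, y i ≤ c S + ε * S.card)
    (hy_univ : ∑ i, y i = c univ) (S : Finset ι) :
    ∑ i ∈ S, (y i - ε) ≤ c S := by
  rw [sum_sub_distrib, sum_const, nsmul_eq_mul]
  rcases (subset_univ S).eq_or_ssubset with rfl | hS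
  · have : 0 ≤ ((univ : Finset ι).card : ℝ) * ε := by positivity
    linarith
  · linarith [hy S hS]

theorem sum_add_const_le_of_le {ι : Type*} (c : Finset ι → ℝ) {x : ι → ℝ}
    (hx : ∀ S : Finset ι, ∑ i ∈ S, x i ≤ c S)
    (d : ℝ) (S : Finset ι) : ∑ i ∈ S, (x i + d) ≤ c S + d * S.card := by
  rw [sum_add_distrib, sum_const, nsmul_eq_mul, mul_comm]
  linarith [hx S]

theorem cost_of_stability_eq_weak_core_general {n : ℕ} (c : Finset (Fin n) → ℝ)
    (m εw : ℝ)
    (hm : IsGreatest {v : ℝ | ∃ x : Fin n → ℝ,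
      (∀ S : Finset (Fin n), ∑ i ∈ S, x i ≤ c S) ∧ v = ∑ i, x i} m)
    (hεw : IsLeast {ε : ℝ | 0 ≤ ε ∧ ∃ x : Fin n → ℝ,
      (∀ S : Finset (Fin n), S ⊂ univ → ∑ i ∈ S, x i ≤ c S + ε * S.card) ∧
      ∑ i, x i = c univ} εw) :
    c univ - m = n * εw := by
  obtain ⟨⟨x, hx, rfl⟩, hm_max⟩ := hm
  obtain ⟨⟨hεw_nonneg, y, hy, hy_univ⟩, hεw_min⟩ := hεw
  have lower : c univ - n * εw ≤ ∑ i, x i := by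
    refine hm_max ⟨fun i => y i - εw,
      sum_sub_const_le_of_weak_core c hεw_nonneg hy hy_univ, ?_⟩
    simp [sum_sub_distrib, hy_univ]
  have upper : n * εw ≤ c univ - ∑ i, x i := by
    rcases n.eq_zero_or_pos with rfl | hn
    · simpa using hx univ
    have hn' : (0 : ℝ) < n := by exact_mod_cast hn
    set d := (c univ - ∑ i, x i) / n with hd
    have hd_nonneg : 0 ≤ d := div_nonneg (by linarith [hx univ]) hn'.le
    have hεw_le : εw ≤ d := by
      refine hεw_min ⟨hd_nonneg, fun i => x i + d,
        fun S _ => sum_add_const_le_of_le c hx d S, ?_⟩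
      rw [sum_add_distrib, sum_const, card_univ, Fintype.card_fin, nsmul_eq_mul, hd,
        mul_div_cancel₀ _ hn'.ne']
      ring
    calc (n : ℝ) * εw ≤ n * d := by gcongr
      _ = c univ - ∑ i, x i := mul_div_cancel₀ _ hn'.ne'
  linarith

/-- For a TU cost game with empty core, the cost of stability
`δ_CoS = c(N) - max{x(N) : x(S) ≤ c(S) ∀ S ⊆ N}` equals `n · ε_w*`, where `ε_w*` is the
smallest ε ≥ 0 such that the weak ε-core is non-empty. -/
theorem cost_of_stability_eq_weak_core {n : ℕ} (c : Finset (Fin n) → ℝ)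
    (hc : ∀ S, 0 ≤ c S)
    (hempty : ¬ ∃ x : Fin n → ℝ,
      (∀ S : Finset (Fin n), S ⊂ univ → ∑ i ∈ S, x i ≤ c S) ∧
      ∑ i, x i = c univ)
    (m εw : ℝ)
    (hm : IsGreatest {v : ℝ | ∃ x : Fin n → ℝ,
      (∀ S : Finset (Fin n), ∑ i ∈ S, x i ≤ c S) ∧ v = ∑ i, x i} m)
    (hεw : IsLeast {ε : ℝ | 0 ≤ ε ∧ ∃ x : Fin n → ℝ,
      (∀ S : Finset (Fin n), S ⊂ univ → ∑ i ∈ S, x i ≤ c S + ε * S.card) ∧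
      ∑ i, x i = c univ} εw) :
    c univ - m = n * εw :=
  cost_of_stability_eq_weak_core_general c m εw hm hεw
end

section
/- Let (N,c) be a TU cost game satisfying c(N∖{k}) ≤ c(N) for all k ∈ N, with |N| = n ≥ 2. Then every allocation x ∈ ℝ^N with x(S) ≤ c(S) for all proper subsets S ⊊ N satisfies x(N) ≤ (1 + 1/(n-1)) · c(N). -/
open Finset

/-!
Summing the constraints `x(N ∖ {k}) ≤ c(N ∖ {k}) ≤ c(N)` over all `k ∈ N` counts every player
`n - 1` times, so `(n - 1) · x(N) ≤ n · c(N)`.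
-/

theorem Finset.sum_sum_erase_univ {ι R : Type*} [Fintype ι] [DecidableEq ι] [CommRing R]
    (x : ι → R) :
    ∑ k, ∑ i ∈ univ.erase k, x i = ((Fintype.card ι : R) - 1) * ∑ i, x i := by
  simp only [sum_erase_eq_sub (mem_univ _), sum_sub_distrib, sum_const, card_univ, nsmul_eq_mul]
  ring

theorem card_sub_one_mul_sum_le_of_sum_erase_le {ι R : Type*} [Fintype ι] [DecidableEq ι]
    [CommRing R] [PartialOrder R] [IsOrderedRing R] (x : ι → R) (C : R)
    (h : ∀ k, ∑ i ∈ univ.erase k, x i ≤ C) :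
    ((Fintype.card ι : R) - 1) * ∑ i, x i ≤ Fintype.card ι * C := by
  calc ((Fintype.card ι : R) - 1) * ∑ i, x i = ∑ k, ∑ i ∈ univ.erase k, x i :=
        (sum_sum_erase_univ x).symm
    _ ≤ ∑ _k : ι, C := sum_le_sum fun k _ ↦ h k
    _ = Fintype.card ι * C := by rw [sum_const, card_univ, nsmul_eq_mul]

theorem almost_core_bound_general {n : ℕ} (hn : 2 ≤ n) (c : Finset (Fin n) → ℝ)
    (hmono : ∀ k : Fin n, c (univ.erase k) ≤ c univ)
    (x : Fin n → ℝ)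
    (hx : ∀ S : Finset (Fin n), S ⊂ univ → ∑ i ∈ S, x i ≤ c S) :
    ∑ i, x i ≤ (1 + 1 / ((n : ℝ) - 1)) * c univ := by
  have hpos : (0 : ℝ) < n - 1 := by
    have : (2 : ℝ) ≤ n := by exact_mod_cast hn
    linarith
  have key : ((n : ℝ) - 1) * ∑ i, x i ≤ n * c univ := by
    simpa using card_sub_one_mul_sum_le_of_sum_erase_le x (c univ)
      fun k ↦ (hx _ (erase_ssubset (mem_univ k))).trans (hmono k)
  have hcoeff : 1 + 1 / ((n : ℝ) - 1) = n / (n - 1) := by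
    field_simp
    ring
  rw [hcoeff, div_mul_eq_mul_div, le_div_iff₀ hpos]
  linarith

/-- If c(N∖{k}) ≤ c(N) for all k and n ≥ 2, then every almost core allocation x
satisfies x(N) ≤ (1 + 1/(n-1))·c(N). -/
theorem almost_core_bound {n : ℕ} (hn : 2 ≤ n) (c : Finset (Fin n) → ℝ)
    (hc : ∀ S, 0 ≤ c S)
    (hmono : ∀ k : Fin n, c (univ.erase k) ≤ c univ)
    (x : Fin n → ℝ)
    (hx : ∀ S : Finset (Fin n), S ⊂ univ → ∑ i ∈ S, x i ≤ c S) :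
    ∑ i, x i ≤ (1 + 1 / ((n : ℝ) - 1)) * c univ :=
  almost_core_bound_general hn c hmono x hx
end

section
/- For a TU cost game (N,c) with empty core, the constraint x(N) ≤ c(N) is implied by the constraints x(S) ≤ c(S) for all proper S ⊊ N; that is, the almost core AC(N,c) equals the polyhedron P(N,c) = { x : x(S) ≤ c(S) for all S ⊆ N }. -/
open Finset

/-!
If an element of the almost core had `x(N) > c(N)`, lowering one of its coordinates would reach
`x(N) = c(N)` without violating any constraint `x(S) ≤ c(S)`, since these are monotone in `x`;
that would be a core element. The case `N = ∅` is covered by `c ≥ 0`.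
-/

theorem exists_le_sum_univ_eq {ι : Type*} [Fintype ι] [Nonempty ι] (x : ι → ℝ) {a : ℝ}
    (ha : a ≤ ∑ i, x i) : ∃ y ≤ x, ∑ i, y i = a := by
  classical
  let i₀ : ι := Classical.arbitrary ι
  refine ⟨x - Pi.single i₀ (∑ i, x i - a : ℝ), fun i => ?_, ?_⟩
  · rcases eq_or_ne i i₀ with rfl | hi
    · simp [ha]
    · simp [hi]
  · simp [sum_sub_distrib, sum_pi_single']

theorem sum_univ_le_of_forall_ssubset_univ_of_not_exists {ι : Type*} [Fintype ι]
    (c : Finset ι → ℝ) (hc : 0 ≤ c univ)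
    (hempty : ¬ ∃ x : ι → ℝ, (∀ S, S ⊂ univ → ∑ i ∈ S, x i ≤ c S) ∧ ∑ i, x i = c univ)
    {x : ι → ℝ} (hx : ∀ S, S ⊂ univ → ∑ i ∈ S, x i ≤ c S) :
    ∑ i, x i ≤ c univ := by
  by_contra! hlt
  cases isEmpty_or_nonempty ι
  · rw [sum_of_isEmpty] at hlt
    linarith
  obtain ⟨y, hyx, hy⟩ := exists_le_sum_univ_eq x hlt.le
  exact hempty ⟨y, fun S hS => (sum_le_sum fun i _ => hyx i).trans (hx S hS), hy⟩

theorem empty_core_almost_core_eq_P_general {n : ℕ} (c : Finset (Fin n) → ℝ)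
    (hc : ∀ S, 0 ≤ c S)
    (hempty : ¬ ∃ x : Fin n → ℝ,
      (∀ S : Finset (Fin n), S ⊂ univ → ∑ i ∈ S, x i ≤ c S) ∧
      ∑ i, x i = c univ) :
    ∀ x : Fin n → ℝ,
      (∀ S : Finset (Fin n), S ⊂ univ → ∑ i ∈ S, x i ≤ c S) ↔
      (∀ S : Finset (Fin n), ∑ i ∈ S, x i ≤ c S) := by
  refine fun x => ⟨fun hx S => ?_, fun hx S _ => hx S⟩
  rcases (subset_univ S).eq_or_ssubset with rfl | hS
  · exact sum_univ_le_of_forall_ssubset_univ_of_not_exists c (hc univ) hempty hx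
  · exact hx S hS

/-- For a TU cost game with empty core, the almost core equals P(N,c): the
constraint x(N) ≤ c(N) is implied by the proper-coalition constraints. -/
theorem empty_core_almost_core_eq_P {n : ℕ} (c : Finset (Fin n) → ℝ)
    (hc : ∀ S, 0 ≤ c S) (m : ℝ)
    (hm : IsGreatest {v : ℝ | ∃ x : Fin n → ℝ,
      (∀ S : Finset (Fin n), S ⊂ univ → ∑ i ∈ S, x i ≤ c S) ∧ v = ∑ i, x i} m)
    (hempty : ¬ ∃ x : Fin n → ℝ,
      (∀ S : Finset (Fin n), S ⊂ univ → ∑ i ∈ S, x i ≤ c S) ∧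
      ∑ i, x i = c univ) :
    ∀ x : Fin n → ℝ,
      (∀ S : Finset (Fin n), S ⊂ univ → ∑ i ∈ S, x i ≤ c S) ↔
      (∀ S : Finset (Fin n), ∑ i ∈ S, x i ≤ c S) :=
  empty_core_almost_core_eq_P_general c hc hempty
end

section
/- Let (N,c) be a TU cost game and let x be an allocation maximizing x(N) over the almost core. Then for every i ∈ N there exists a proper subset S ⊊ N with i ∈ S and x(S) = c(S); consequently x_i ≥ -∑_{j∈N} c({j}) for all i ∈ N. -/
/-!
If no proper coalition containing `i` were tight, every constraint involving `i` would have
positive slack, so raising `x i` by a small `ε > 0` would stay in the almost core and increase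
`x(N)`. Given a tight proper `S ∋ i`, write `x i = c(S) - x(S \ {i})`; every singleton inside `S`
is a proper coalition, so `x(S \ {i}) ≤ ∑_{j ∈ S \ {i}} c({j}) ≤ ∑_j c({j})` as `c ≥ 0`.
-/

open Finset Filter Topology

namespace CostGame

variable {ι : Type*} [Fintype ι] {c : Finset ι → ℝ} {x : ι → ℝ}

def almostCore (c : Finset ι → ℝ) : Set (ι → ℝ) :=
  {x | ∀ S : Finset ι, S ⊂ univ → ∑ i ∈ S, x i ≤ c S}

theorem add_single_mem_almostCore [DecidableEq ι] (hx : x ∈ almostCore c) {i : ι} {ε : ℝ}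
    (hε : ∀ S : Finset ι, S ⊂ univ → i ∈ S → ∑ j ∈ S, x j + ε ≤ c S) :
    x + Pi.single i ε ∈ almostCore c := by
  intro S hS
  simp only [Pi.add_apply, sum_add_distrib, sum_pi_single']
  split_ifs with hiS
  · exact hε S hS hiS
  · simpa using hx S hS

theorem exists_pos_forall_add_le_of_forall_lt {i : ι}
    (hslack : ∀ S : Finset ι, S ⊂ univ → i ∈ S → ∑ j ∈ S, x j < c S) :
    ∃ ε > 0, ∀ S : Finset ι, S ⊂ univ → i ∈ S → ∑ j ∈ S, x j + ε ≤ c S := by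
  have hsmall : ∀ᶠ ε in 𝓝 (0 : ℝ), ∀ S : Finset ι, S ⊂ univ → i ∈ S →
      ∑ j ∈ S, x j + ε ≤ c S := by
    refine eventually_all.2 fun S => ?_
    by_cases hS : S ⊂ univ ∧ i ∈ S
    · filter_upwards [eventually_lt_nhds (sub_pos.2 (hslack S hS.1 hS.2))] with ε hε
      intro _ _
      linarith
    · exact Eventually.of_forall fun _ h₁ h₂ => absurd ⟨h₁, h₂⟩ hS
  obtain ⟨ε, hεpos, hε⟩ := hsmall.exists_gt
  exact ⟨ε, hεpos, hε⟩

theorem exists_tight_of_isMaxOn [DecidableEq ι] (hx : x ∈ almostCore c)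
    (hmax : IsMaxOn (fun y : ι → ℝ => ∑ i, y i) (almostCore c) x) (i : ι) :
    ∃ S : Finset ι, S ⊂ univ ∧ i ∈ S ∧ ∑ j ∈ S, x j = c S := by
  by_contra! hloose
  have hslack : ∀ S : Finset ι, S ⊂ univ → i ∈ S → ∑ j ∈ S, x j < c S :=
    fun S hS hiS => (hx S hS).lt_of_ne (hloose S hS hiS)
  obtain ⟨ε, hεpos, hε⟩ := exists_pos_forall_add_le_of_forall_lt hslack
  have hbetter := isMaxOn_iff.1 hmax _ (add_single_mem_almostCore hx hε)
  simp only [Pi.add_apply, sum_add_distrib, Fintype.sum_pi_single'] at hbetter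
  linarith

theorem sum_le_sum_singleton_of_mem_almostCore (hx : x ∈ almostCore c) {T : Finset ι}
    (hT : T ⊂ univ) : ∑ j ∈ T, x j ≤ ∑ j ∈ T, c {j} :=
  sum_le_sum fun j hj => by
    simpa using hx {j} ((singleton_subset_iff.2 hj).trans_ssubset hT)

theorem neg_sum_singleton_le_of_tight [DecidableEq ι] (hc : ∀ S, 0 ≤ c S) (hx : x ∈ almostCore c)
    {S : Finset ι} (hS : S ⊂ univ) {i : ι} (hiS : i ∈ S) (htight : ∑ j ∈ S, x j = c S) :
    -(∑ j, c {j}) ≤ x i := by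
  have hsplit : x i + ∑ j ∈ S.erase i, x j = c S := by rw [add_sum_erase S x hiS, htight]
  have hrest : ∑ j ∈ S.erase i, x j ≤ ∑ j, c {j} :=
    calc ∑ j ∈ S.erase i, x j ≤ ∑ j ∈ S.erase i, c {j} :=
          sum_le_sum_singleton_of_mem_almostCore hx ((erase_subset i S).trans_ssubset hS)
      _ ≤ ∑ j, c {j} := sum_le_univ_sum_of_nonneg fun j => hc {j}
  linarith [hc S]

end CostGame

open Finset

theorem optimal_almost_core_tight_and_bounded_general {n : ℕ}
    (c : Finset (Fin n) → ℝ) (hc : ∀ S, 0 ≤ c S)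
    (x : Fin n → ℝ)
    (hfeas : ∀ S : Finset (Fin n), S ⊂ univ → ∑ i ∈ S, x i ≤ c S)
    (hopt : ∀ y : Fin n → ℝ,
      (∀ S : Finset (Fin n), S ⊂ univ → ∑ i ∈ S, y i ≤ c S) →
      ∑ i, y i ≤ ∑ i, x i) :
    (∀ i : Fin n, ∃ S : Finset (Fin n), S ⊂ univ ∧ i ∈ S ∧ ∑ j ∈ S, x j = c S) ∧
    (∀ i : Fin n, -(∑ j : Fin n, c {j}) ≤ x i) := by
  have htight := CostGame.exists_tight_of_isMaxOn hfeas (isMaxOn_iff.2 hopt)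
  refine ⟨htight, fun i => ?_⟩
  obtain ⟨S, hS, hiS, hSx⟩ := htight i
  exact CostGame.neg_sum_singleton_le_of_tight hc hfeas hS hiS hSx

/-- If x maximizes x(N) over the almost core, then for every i there is a
tight proper coalition S ∋ i with x(S) = c(S); consequently x_i ≥ -∑_j c({j}). -/
theorem optimal_almost_core_tight_and_bounded {n : ℕ} (hn : 2 ≤ n)
    (c : Finset (Fin n) → ℝ) (hc : ∀ S, 0 ≤ c S)
    (x : Fin n → ℝ)
    (hfeas : ∀ S : Finset (Fin n), S ⊂ univ → ∑ i ∈ S, x i ≤ c S)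
    (hopt : ∀ y : Fin n → ℝ,
      (∀ S : Finset (Fin n), S ⊂ univ → ∑ i ∈ S, y i ≤ c S) →
      ∑ i, y i ≤ ∑ i, x i) :
    (∀ i : Fin n, ∃ S : Finset (Fin n), S ⊂ univ ∧ i ∈ S ∧ ∑ j ∈ S, x j = c S) ∧
    (∀ i : Fin n, -(∑ j : Fin n, c {j}) ≤ x i) :=
  optimal_almost_core_tight_and_bounded_general c hc x hfeas hopt
end

section
/- In the minimum cost spanning tree game on three players with supplier 0 and edge weights w(0,1)=0, w(0,2)=2k, w(0,3)=2k, w(1,2)=0, w(1,3)=0, w(2,3)=0 (k > 0), the unique allocation maximizing x(N) over the almost core is x = (-k, k, k); in particular every optimal almost core allocation has a strictly negative component. -/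
open Finset

/-! For three players only the pair constraints matter for the total: adding
`y 0 + y 1 ≤ c {0,1}`, `y 0 + y 2 ≤ c {0,2}` and `y 1 + y 2 ≤ c {1,2}` gives
`2 ∑ i, y i ≤ c {0,1} + c {0,2} + c {1,2}`, and equality forces all three to be tight, which pins
down `y`. With the given costs this bound is `2k`, attained only at `(-k, k, k)`. -/

def IsAlmostCoreAllocation {ι : Type*} [Fintype ι] (c : Finset ι → ℝ) (y : ι → ℝ) : Prop :=
  ∀ S : Finset ι, S ⊂ univ → ∑ i ∈ S, y i ≤ c S

lemma Finset.ssubset_univ_fin_three {S : Finset (Fin 3)} (hS : S ⊂ univ) :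
    S = ∅ ∨ S = {0} ∨ S = {1} ∨ S = {2} ∨ S = {0, 1} ∨ S = {0, 2} ∨ S = {1, 2} := by
  have hne : S ≠ univ := hS.ne
  fin_cases S <;> revert hne <;> decide

section FinThree

variable {c : Finset (Fin 3) → ℝ} {y : Fin 3 → ℝ}

lemma isAlmostCoreAllocation_fin_three_iff :
    IsAlmostCoreAllocation c y ↔
      0 ≤ c ∅ ∧ y 0 ≤ c {0} ∧ y 1 ≤ c {1} ∧ y 2 ≤ c {2} ∧
        y 0 + y 1 ≤ c {0, 1} ∧ y 0 + y 2 ≤ c {0, 2} ∧ y 1 + y 2 ≤ c {1, 2} := by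
  refine ⟨fun hy => ?_, fun ⟨hempty, h0, h1, h2, h01, h02, h12⟩ S hS => ?_⟩
  · exact ⟨by simpa using hy ∅ (by decide), by simpa using hy {0} (by decide),
      by simpa using hy {1} (by decide), by simpa using hy {2} (by decide),
      by simpa using hy {0, 1} (by decide), by simpa using hy {0, 2} (by decide),
      by simpa using hy {1, 2} (by decide)⟩
  · rcases ssubset_univ_fin_three hS with rfl | rfl | rfl | rfl | rfl | rfl | rfl <;>
      simpa

namespace IsAlmostCoreAllocation

lemma two_mul_sum_le (hy : IsAlmostCoreAllocation c y) :
    2 * ∑ i, y i ≤ c {0, 1} + c {0, 2} + c {1, 2} := by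
  obtain ⟨-, -, -, -, h01, h02, h12⟩ := isAlmostCoreAllocation_fin_three_iff.mp hy
  rw [Fin.sum_univ_three]
  linarith

lemma eq_of_two_mul_sum_eq (hy : IsAlmostCoreAllocation c y)
    (hsum : 2 * ∑ i, y i = c {0, 1} + c {0, 2} + c {1, 2}) :
    y = ![(c {0, 1} + c {0, 2} - c {1, 2}) / 2, (c {0, 1} + c {1, 2} - c {0, 2}) / 2,
      (c {0, 2} + c {1, 2} - c {0, 1}) / 2] := by
  obtain ⟨-, -, -, -, h01, h02, h12⟩ := isAlmostCoreAllocation_fin_three_iff.mp hy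
  rw [Fin.sum_univ_three] at hsum
  ext i
  fin_cases i <;> simp <;> linarith

end IsAlmostCoreAllocation

end FinThree

/-- In the 3-player MST game with c({1})=0, c({2})=2k, c({3})=2k, c({1,2})=0,
c({1,3})=0, c({2,3})=2k (players 1,2,3 as Fin 3 indices 0,1,2; k>0), the unique allocation
maximizing x(N) over the almost core is x = (-k,k,k); in particular every optimal almost
core allocation has a strictly negative component. -/
theorem mst_subsidy_necessary (k : ℝ) (hk : 0 < k) (c : Finset (Fin 3) → ℝ)
    (h0 : c ∅ = 0)
    (h1 : c {0} = 0) (h2 : c {1} = 2 * k) (h3 : c {2} = 2 * k)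
    (h12 : c {0, 1} = 0) (h13 : c {0, 2} = 0) (h23 : c {1, 2} = 2 * k)
    (x : Fin 3 → ℝ) (hx : x = ![-k, k, k]) :
    (∀ S : Finset (Fin 3), S ⊂ univ → ∑ i ∈ S, x i ≤ c S) ∧
    (∀ y : Fin 3 → ℝ, (∀ S : Finset (Fin 3), S ⊂ univ → ∑ i ∈ S, y i ≤ c S) →
      ∑ i, y i ≤ ∑ i, x i) ∧
    (∀ y : Fin 3 → ℝ, (∀ S : Finset (Fin 3), S ⊂ univ → ∑ i ∈ S, y i ≤ c S) →
      ∑ i, y i = ∑ i, x i → y = x) ∧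
    x 0 < 0 := by
  subst hx
  have hsum : ∑ i, (![-k, k, k] : Fin 3 → ℝ) i = k := by
    simp [Fin.sum_univ_three]
  have hpairs : c {0, 1} + c {0, 2} + c {1, 2} = 2 * k := by
    rw [h12, h13, h23]; ring
  refine ⟨?_, fun y hy => ?_, fun y hy hy_sum => ?_, by simpa using hk⟩
  · refine isAlmostCoreAllocation_fin_three_iff.mpr ?_
    simp only [h0, h1, h2, h3, h12, h13, h23, Matrix.cons_val_zero, Matrix.cons_val_one,
      Matrix.cons_val_two, Matrix.tail_cons, Matrix.head_cons]
    refine ⟨le_rfl, ?_, ?_, ?_, ?_, ?_, ?_⟩ <;> linarith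
  · have := IsAlmostCoreAllocation.two_mul_sum_le hy
    linarith
  · rw [IsAlmostCoreAllocation.eq_of_two_mul_sum_eq hy (by linarith), h12, h13, h23]
    ext i
    fin_cases i <;> simp; ring
end

section
/- Let x^ALG be the (nonnegative, almost-core-feasible) allocation produced by Algorithm 1 for an MST game, and let x^OPT be any nonnegative almost core allocation. Then x^OPT(N) ≤ 2 · x^ALG(N). Equivalently, Algorithm 1 is a 2-approximation for maximizing x(N) over { x ≥ 0 : x(S) ≤ c(S) for all S ⊊ N }. -/
/-!
Split `x^OPT(N) = x^OPT(N ∖ {n}) + x^OPT_n`. Each summand is bounded by `x^ALG(N)` through a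
coalition that is tight for `x^ALG`: `N ∖ {n}` for the first, and `N ∖ {k*}`, which contains `n`,
for the second.
-/

open Finset

theorem sum_le_sum_univ_of_tight {ι M : Type*} [Fintype ι] [AddCommMonoid M] [PartialOrder M]
    [IsOrderedAddMonoid M] {c : Finset ι → M} {x y : ι → M} (hx : ∀ i, 0 ≤ x i) {S : Finset ι}
    (hy : ∑ i ∈ S, y i ≤ c S) (hS : ∑ i ∈ S, x i = c S) : ∑ i ∈ S, y i ≤ ∑ i, x i :=
  hy.trans <| hS.symm.le.trans <| sum_le_sum_of_subset_of_nonneg (subset_univ S) fun i _ _ => hx i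

theorem mst_algo_two_approx_general {n : ℕ}
    (c : Finset (Fin (n + 1)) → ℝ)
    (xALG xOPT : Fin (n + 1) → ℝ)
    (hAnn : ∀ i, 0 ≤ xALG i)
    (hAlast : ∑ i ∈ univ.erase (Fin.last n), xALG i = c (univ.erase (Fin.last n)))
    (hAk : ∃ k : Fin (n + 1), k ≠ Fin.last n ∧
      ∑ i ∈ univ.erase k, xALG i = c (univ.erase k))
    (hOnn : ∀ i, 0 ≤ xOPT i)
    (hOfeas : ∀ S : Finset (Fin (n + 1)), S ⊂ univ → ∑ i ∈ S, xOPT i ≤ c S) :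
    ∑ i, xOPT i ≤ 2 * ∑ i, xALG i := by
  obtain ⟨k, hk, hk_tight⟩ := hAk
  have hOPT_erase_last : ∑ i ∈ univ.erase (Fin.last n), xOPT i ≤ ∑ i, xALG i :=
    sum_le_sum_univ_of_tight hAnn (hOfeas _ (erase_ssubset (mem_univ _))) hAlast
  have hOPT_last : xOPT (Fin.last n) ≤ ∑ i, xALG i :=
    calc xOPT (Fin.last n) ≤ ∑ i ∈ univ.erase k, xOPT i :=
          single_le_sum (fun i _ => hOnn i) (mem_erase.2 ⟨hk.symm, mem_univ _⟩)
      _ ≤ ∑ i, xALG i :=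
          sum_le_sum_univ_of_tight hAnn (hOfeas _ (erase_ssubset (mem_univ k))) hk_tight
  calc ∑ i, xOPT i = ∑ i ∈ univ.erase (Fin.last n), xOPT i + xOPT (Fin.last n) :=
        (sum_erase_add _ _ (mem_univ _)).symm
    _ ≤ ∑ i, xALG i + ∑ i, xALG i := add_le_add hOPT_erase_last hOPT_last
    _ = 2 * ∑ i, xALG i := (two_mul _).symm

/-- Algorithm 1 is a 2-approximation for maximizing x(N) over the nonnegative
almost core of an MST game. Players are Fin (n+1), last player `Fin.last n`. Hypotheses are
the properties of the Algorithm 1 output: nonnegative, almost-core-feasible,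
x^ALG(N∖{last}) = c(N∖{last}), and some k* ≠ last with x^ALG(N∖{k*}) = c(N∖{k*}).
Then any nonnegative almost core allocation x^OPT satisfies x^OPT(N) ≤ 2·x^ALG(N). -/
theorem mst_algo_two_approx {n : ℕ} (hn : 1 ≤ n)
    (c : Finset (Fin (n + 1)) → ℝ)
    (xALG xOPT : Fin (n + 1) → ℝ)
    (hAnn : ∀ i, 0 ≤ xALG i)
    (hAfeas : ∀ S : Finset (Fin (n + 1)), S ⊂ univ → ∑ i ∈ S, xALG i ≤ c S)
    (hAlast : ∑ i ∈ univ.erase (Fin.last n), xALG i = c (univ.erase (Fin.last n)))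
    (hAk : ∃ k : Fin (n + 1), k ≠ Fin.last n ∧
      ∑ i ∈ univ.erase k, xALG i = c (univ.erase k))
    (hOnn : ∀ i, 0 ≤ xOPT i)
    (hOfeas : ∀ S : Finset (Fin (n + 1)), S ⊂ univ → ∑ i ∈ S, xOPT i ≤ c S) :
    ∑ i, xOPT i ≤ 2 * ∑ i, xALG i :=
  mst_algo_two_approx_general c xALG xOPT hAnn hAlast hAk hOnn hOfeas
end
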